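/- Consider the 3-color FCA on a path of four vertices {0,1,2,3} with update rule X_{t+1}(v) = X_t(v) if X_t(v) = 2 and some path-neighbor has color 1, else X_t(v)+1 mod 3. Let X_0 be uniformly distributed on (ℤ_3)^4 (81 equally likely colorings) and define g(X_0) = X_1(2) − X_1(1), where the difference of the time-1 colors is coded as the representative in {−2,−1,0,1,2} given by the signed color differential as in the FCA particle system. Then E[g] = 0 and E[g²] = 40/81. -/

import Mathlib

open scoped BigOperators

/-- One synchronous step of the 3-color FCA on the path `0 – 1 – 2 – 3`. -/
def fcaStep4 (c : Fin 4 → ZMod 3) : Fin 4 → ZMod 3 := fun v =>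
  if c v = 2 ∧ (∃ u : Fin 4, ((u : ℕ) + 1 = (v : ℕ) ∨ (v : ℕ) + 1 = (u : ℕ)) ∧ c u = 1)
  then c v else c v + 1

/-- The representative in `{-1,0,1} ⊆ ℝ` of an element of `ℤ₃`. -/
def code3 (z : ZMod 3) : ℝ := if z = 0 then 0 else if z = 1 then 1 else -1

/-- The FCA edge increment `g(X₀) = dX₁(1,2)`: the coded color differential of
the middle two sites after one synchronous FCA update of the path of four. -/
noncomputable def g11 (c : Fin 4 → ZMod 3) : ℝ :=
  code3 (fcaStep4 c 2 - fcaStep4 c 1)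

/-!
Reflecting the path, `v ↦ 3 - v`, commutes with the FCA step and swaps sites `1` and `2`, so it
negates the increment (the coding `ℤ₃ → {-1, 0, 1}` is odd); since the reflection permutes the
colorings, the mean of `g` is `0`. The square of `g` is the indicator of `X₁(1) ≠ X₁(2)`, which
holds for exactly `40` of the `81` colorings.
-/

open Finset

lemma code3_neg (z : ZMod 3) : code3 (-z) = -code3 z := by
  obtain rfl | rfl | rfl : z = 0 ∨ z = 1 ∨ z = 2 := by revert z; decide
  all_goals norm_num +decide [code3, show (-1 : ZMod 3) = 2 from rfl, show (-2 : ZMod 3) = 1 from rfl]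

lemma code3_sq (z : ZMod 3) : code3 z ^ 2 = if z = 0 then 0 else 1 := by
  unfold code3; split_ifs <;> norm_num

lemma Fin.rev_adjacent_iff {n : ℕ} {u v : Fin n} :
    ((u.rev : ℕ) + 1 = v.rev ∨ (v.rev : ℕ) + 1 = u.rev) ↔ ((u : ℕ) + 1 = v ∨ (v : ℕ) + 1 = u) := by
  simp only [Fin.val_rev]; omega

lemma fcaStep4_comp_rev (c : Fin 4 → ZMod 3) (v : Fin 4) :
    fcaStep4 (c ∘ Fin.rev) v = fcaStep4 c v.rev := by
  have hnbr : (∃ u : Fin 4, ((u : ℕ) + 1 = v ∨ (v : ℕ) + 1 = u) ∧ c u.rev = 1) ↔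
      ∃ u : Fin 4, ((u : ℕ) + 1 = v.rev ∨ (v.rev : ℕ) + 1 = u) ∧ c u = 1 :=
    Fin.revPerm.exists_congr fun u => by simp [← Fin.rev_adjacent_iff (u := u) (v := v), Or.comm]
  simp only [fcaStep4, Function.comp_apply, hnbr]

lemma g11_comp_rev (c : Fin 4 → ZMod 3) : g11 (c ∘ Fin.rev) = -g11 c := by
  rw [g11, g11, fcaStep4_comp_rev, fcaStep4_comp_rev, ← code3_neg, neg_sub]
  rfl

lemma sum_g11 : ∑ c : Fin 4 → ZMod 3, g11 c = 0 := by
  have hinv : Function.Involutive fun c : Fin 4 → ZMod 3 => c ∘ Fin.rev := fun c => by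
    funext v; simp
  have hsum := Fintype.sum_bijective _ hinv.bijective (fun c => g11 (c ∘ Fin.rev)) g11 fun _ => rfl
  simp only [g11_comp_rev, sum_neg_distrib] at hsum
  linarith

lemma g11_sq (c : Fin 4 → ZMod 3) : g11 c ^ 2 = if fcaStep4 c 1 ≠ fcaStep4 c 2 then 1 else 0 := by
  simp only [g11, code3_sq, sub_eq_zero, eq_comm (a := fcaStep4 c 2), ne_eq, ite_not]

lemma card_fcaStep4_ne : #{c : Fin 4 → ZMod 3 | fcaStep4 c 1 ≠ fcaStep4 c 2} = 40 := by
  decide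

/-- with `X₀` uniform on the `81` colorings of the path of four,
the FCA increment `g = dX₁(1,2)` satisfies `E[g] = 0` and `E[g²] = 40/81`. -/
theorem stmt_11 :
    (∑ c : Fin 4 → ZMod 3, g11 c) / 81 = 0 ∧
    (∑ c : Fin 4 → ZMod 3, (g11 c) ^ 2) / 81 = 40 / 81 := by
  refine ⟨by rw [sum_g11, zero_div], ?_⟩
  simp_rw [g11_sq]
  rw [sum_boole, card_fcaStep4_ne, Nat.cast_ofNat]
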